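/- For any two facets I, J of a subword complex SC(Q,ρ) and any multisets A, B of positions, there exists a path of increasing flips from I to J with weakly decreasing positive labels that flips out exactly the multiset A and flips in exactly the multiset B, if and only if there exists a path of increasing flips from I to J with weakly decreasing negative labels flipping out A and flipping in B. In particular, the number of positive-falling paths from I to J equals the number of negative-falling paths from I to J. -/

import Mathlib

open scoped Classical

/-- Directed walks in a graph `E`, recorded by the list of vertices after the start. -/
inductive DWalk {α : Type*} (E : α → α → Prop) : α → α → List α → Prop
  | nil (u : α) : DWalk E u u []
  | cons {u w v : α} {l : List α} : E u w → DWalk E w v l → DWalk E u v (w :: l)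

/-- The sequence of edge labels along a walk from `u` with vertex list `l`. -/
def wLabels {α : Type*} (lab : α → α → ℕ) (u : α) (l : List α) : List ℕ :=
  List.zipWith lab (u :: l) l

/-- A facet of the subword complex `SC(Q, ρ)`: a set of positions whose complement is
a reduced expression for `ρ` as a subword of `Q`. -/
def IsSCFacet {B W : Type*} [Group W] {M : CoxeterMatrix B} (cs : CoxeterSystem M W)
    {m : ℕ} (Q : Fin m → B) (ρ : W) (I : Finset (Fin m)) : Prop :=
  cs.wordProd ((Iᶜ.sort (· ≤ ·)).map Q) = ρ ∧ Iᶜ.card = cs.length ρ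

/-- The edges of the increasing flip graph: `I → J` whenever `I∖{i} = J∖{j}` with
`i < j`. -/
def FlipEdge {B W : Type*} [Group W] {M : CoxeterMatrix B} (cs : CoxeterSystem M W)
    {m : ℕ} (Q : Fin m → B) (ρ : W) (I J : Finset (Fin m)) : Prop :=
  IsSCFacet cs Q ρ I ∧ IsSCFacet cs Q ρ J ∧
    ∃ i ∈ I, ∃ j ∈ J, i < j ∧ I.erase i = J.erase j

/-- The positive edge label of a flip `I → J`: the position flipped out,
i.e. the unique element of `I ∖ J`. -/
def pLab {m : ℕ} (I J : Finset (Fin m)) : ℕ := (I \ J).sup Fin.val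

/-- The negative edge label of a flip `I → J`: the position flipped in,
i.e. the unique element of `J ∖ I`. -/
def nLab {m : ℕ} (I J : Finset (Fin m)) : ℕ := (J \ I).sup Fin.val

/-!
An increasing flip of a facet `I` trades `i ∈ I` for `j ∉ I` with `i < j`, and it is possible
exactly when the root function of `I` (here: the reflection `r(I, ·)` attached to each position)
takes the same value at `i` and `j`; the flip then conjugates `r` on the positions in `(i, j]`.
Consequently, for positions `i < a < j < b`, the flips `i ↦ b, a ↦ j` can be performed in either
order: two consecutive flips whose positive and negative labels cross can be swapped. Such
swaps act as a bubble sort: a positive-falling path becomes negative-falling, with the same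
label multisets, by inserting its edges one at a time from the back, and symmetrically in the
other direction. Finally, `r(I, ·)` is injective on `Iᶜ` because the inversions of a reduced word
are distinct, so a flip is determined by its source and positive label, and also by its target
and negative label. Hence a positive-falling path is determined by its start and its positive
labels, a negative-falling path by its end and its negative labels, and the conversion is a
bijection.
-/

section LabelledWalks

variable {α : Type*} {E : α → α → Prop}

@[simp]
theorem wLabels_nil (lab : α → α → ℕ) (u : α) : wLabels lab u [] = [] := rfl

@[simp]
theorem wLabels_cons (lab : α → α → ℕ) (u x : α) (l : List α) :
    wLabels lab u (x :: l) = lab u x :: wLabels lab x l := rfl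

theorem DWalk.eq_of_wLabels_eq {lab : α → α → ℕ}
    (hlab : ∀ {u x y}, E u x → E u y → lab u x = lab u y → x = y)
    {u v₁ v₂ : α} {l₁ l₂ : List α} (h₁ : DWalk E u v₁ l₁) (h₂ : DWalk E u v₂ l₂)
    (h : wLabels lab u l₁ = wLabels lab u l₂) : l₁ = l₂ := by
  induction h₁ generalizing l₂ with
  | nil => cases h₂ with
    | nil => rfl
    | cons => simp at h
  | cons e₁ _ ih => cases h₂ with
    | nil => simp at h
    | cons e₂ h₂ =>
      simp only [wLabels_cons, List.cons.injEq] at h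
      obtain rfl := hlab e₁ e₂ h.1
      rw [ih h₂ h.2]

theorem DWalk.cons_eq_of_wLabels_eq {lab : α → α → ℕ}
    (hlab : ∀ {x y v}, E x v → E y v → lab x v = lab y v → x = y)
    {u₁ u₂ v : α} {l₁ l₂ : List α} (h₁ : DWalk E u₁ v l₁) (h₂ : DWalk E u₂ v l₂)
    (h : wLabels lab u₁ l₁ = wLabels lab u₂ l₂) : u₁ :: l₁ = u₂ :: l₂ := by
  induction h₁ generalizing u₂ l₂ with
  | nil => cases h₂ with
    | nil => rfl
    | cons => simp at h
  | cons e₁ _ ih => cases h₂ with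
    | nil => simp at h
    | cons e₂ h₂ =>
      simp only [wLabels_cons, List.cons.injEq] at h
      obtain ⟨rfl, rfl⟩ := List.cons.inj (ih h₂ h.2)
      rw [hlab e₁ e₂ h.1]

theorem List.IsChain.le_of_mem_cons {β : Type*} [Preorder β] {c b : β} {L : List β}
    (h : (c :: L).IsChain (· ≥ ·)) (hb : b ∈ L) : b ≤ c :=
  (List.pairwise_cons.1 (List.isChain_iff_pairwise.1 h)).1 b hb

theorem lt_of_mem_wLabels_of_isChain {lab : α → α → ℕ}
    (hne : ∀ {u x y}, E u x → E x y → lab u x ≠ lab x y) {u x v : α} {l : List α}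
    (he : E u x) (hw : DWalk E x v l) (hc : (wLabels lab u (x :: l)).IsChain (· ≥ ·))
    {a : ℕ} (ha : a ∈ wLabels lab x l) : a < lab u x := by
  cases hw with
  | nil => simp at ha
  | @cons _ y _ _ e _ =>
    rw [wLabels_cons, wLabels_cons, List.isChain_cons_cons] at hc
    have hax : a ≤ lab x y := by
      rw [wLabels_cons, List.mem_cons] at ha
      exact ha.elim le_of_eq hc.2.le_of_mem_cons
    exact hax.trans_lt (lt_of_le_of_ne hc.1 (hne he e).symm)

structure IsSquareLabelling (E : α → α → Prop) (p n : α → α → ℕ) : Prop where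
  p_ne : ∀ {u x y}, E u x → E x y → p u x ≠ p x y
  n_ne : ∀ {u x y}, E u x → E x y → n u x ≠ n x y
  swap_of_gt_of_lt : ∀ {u x y}, E u x → E x y → p x y < p u x → n u x < n x y →
    ∃ x', E u x' ∧ E x' y ∧ p u x' = p x y ∧ n u x' = n x y ∧ p x' y = p u x ∧ n x' y = n u x
  swap_of_lt_of_gt : ∀ {u x y}, E u x → E x y → p u x < p x y → n x y < n u x →
    ∃ x', E u x' ∧ E x' y ∧ p u x' = p x y ∧ n u x' = n x y ∧ p x' y = p u x ∧ n x' y = n u x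

namespace IsSquareLabelling

variable {p n : α → α → ℕ}

theorem symm (hE : IsSquareLabelling E p n) : IsSquareLabelling E n p where
  p_ne := hE.n_ne
  n_ne := hE.p_ne
  swap_of_gt_of_lt e₁ e₂ hn hp := by
    obtain ⟨x', e₁', e₂', h₁, h₂, h₃, h₄⟩ := hE.swap_of_lt_of_gt e₁ e₂ hp hn
    exact ⟨x', e₁', e₂', h₂, h₁, h₄, h₃⟩
  swap_of_lt_of_gt e₁ e₂ hn hp := by
    obtain ⟨x', e₁', e₂', h₁, h₂, h₃, h₄⟩ := hE.swap_of_gt_of_lt e₁ e₂ hp hn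
    exact ⟨x', e₁', e₂', h₂, h₁, h₄, h₃⟩

/-- The edge `u → x` is swapped past every edge of negative label larger than its own; each
swap is allowed because its positive label exceeds all positive labels of the walk. -/
theorem exists_nFalling_of_cons (hE : IsSquareLabelling E p n) {u x v : α} {l : List α}
    (he : E u x) (hw : DWalk E x v l) (hc : (wLabels n x l).IsChain (· ≥ ·))
    (hp : ∀ a ∈ wLabels p x l, a < p u x) :
    ∃ l', DWalk E u v l' ∧ (wLabels n u l').IsChain (· ≥ ·) ∧
      (wLabels p u l' : Multiset ℕ) = p u x ::ₘ wLabels p x l ∧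
      (wLabels n u l' : Multiset ℕ) = n u x ::ₘ wLabels n x l := by
  induction hw generalizing u with
  | nil x => exact ⟨[x], .cons he (.nil x), List.isChain_singleton _, rfl, rfl⟩
  | @cons x y v l e hw ih =>
    by_cases hny : n x y ≤ n u x
    · exact ⟨x :: y :: l, .cons he (.cons e hw), List.isChain_cons_cons.2 ⟨hny, hc⟩, rfl, rfl⟩
    obtain ⟨x', e₁, e₂, hp₁, hn₁, hp₂, hn₂⟩ :=
      hE.swap_of_gt_of_lt he e (hp _ (by simp)) (not_le.1 hny)
    obtain ⟨l', hw', hc', hpl, hnl⟩ :=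
      ih e₂ hc.tail fun a ha => hp₂ ▸ hp a (List.mem_cons_of_mem _ ha)
    refine ⟨x' :: l', .cons e₁ hw', hc'.cons fun b hb => ?_, ?_, ?_⟩
    · have hb' : b ∈ (wLabels n x' l' : Multiset ℕ) :=
        Multiset.mem_coe.2 (List.mem_of_mem_head? hb)
      rw [hnl, hn₂, Multiset.mem_cons, Multiset.mem_coe] at hb'
      rw [hn₁]
      exact hb'.elim (fun h => h ▸ (not_le.1 hny).le) hc.le_of_mem_cons
    · rw [wLabels_cons, ← Multiset.cons_coe, hpl, hp₁, hp₂, wLabels_cons, ← Multiset.cons_coe,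
        Multiset.cons_swap]
    · rw [wLabels_cons, ← Multiset.cons_coe, hnl, hn₁, hn₂, wLabels_cons, ← Multiset.cons_coe,
        Multiset.cons_swap]

theorem exists_nFalling (hE : IsSquareLabelling E p n) {u v : α} {l : List α}
    (hw : DWalk E u v l) (hc : (wLabels p u l).IsChain (· ≥ ·)) :
    ∃ l', DWalk E u v l' ∧ (wLabels n u l').IsChain (· ≥ ·) ∧
      (wLabels p u l' : Multiset ℕ) = wLabels p u l ∧
      (wLabels n u l' : Multiset ℕ) = wLabels n u l := by
  induction hw with
  | nil u => exact ⟨[], .nil u, List.isChain_nil, rfl, rfl⟩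
  | cons he hw ih =>
    obtain ⟨l', hw', hc', hpl, hnl⟩ := ih hc.tail
    obtain ⟨l'', hw'', hc'', hpl', hnl'⟩ := hE.exists_nFalling_of_cons he hw' hc' fun a ha => by
      rw [← Multiset.mem_coe, hpl, Multiset.mem_coe] at ha
      exact lt_of_mem_wLabels_of_isChain (lab := p) hE.p_ne he hw hc ha
    exact ⟨l'', hw'', hc'', by rw [hpl', hpl]; rfl, by rw [hnl', hnl]; rfl⟩

theorem exists_pFalling (hE : IsSquareLabelling E p n) {u v : α} {l : List α}
    (hw : DWalk E u v l) (hc : (wLabels n u l).IsChain (· ≥ ·)) :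
    ∃ l', DWalk E u v l' ∧ (wLabels p u l').IsChain (· ≥ ·) ∧
      (wLabels p u l' : Multiset ℕ) = wLabels p u l ∧
      (wLabels n u l' : Multiset ℕ) = wLabels n u l := by
  obtain ⟨l', hw', hc', hnl, hpl⟩ := hE.symm.exists_nFalling hw hc
  exact ⟨l', hw', hc', hpl, hnl⟩

theorem exists_pFalling_iff_exists_nFalling (hE : IsSquareLabelling E p n) (u v : α)
    (A B : Multiset ℕ) :
    (∃ l, DWalk E u v l ∧ (wLabels p u l).IsChain (· ≥ ·) ∧
        (wLabels p u l : Multiset ℕ) = A ∧ (wLabels n u l : Multiset ℕ) = B) ↔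
      ∃ l, DWalk E u v l ∧ (wLabels n u l).IsChain (· ≥ ·) ∧
        (wLabels p u l : Multiset ℕ) = A ∧ (wLabels n u l : Multiset ℕ) = B := by
  constructor
  · rintro ⟨l, hw, hc, rfl, rfl⟩
    exact hE.exists_nFalling hw hc
  · rintro ⟨l, hw, hc, rfl, rfl⟩
    exact hE.exists_pFalling hw hc

/-- A falling label list is determined by its multiset, so by `hp` a positive-falling walk is
determined by its start and positive labels, and by `hn` a negative-falling walk by its end and
negative labels: the conversion of `exists_nFalling` is a bijection. -/
theorem ncard_pFalling_eq_ncard_nFalling (hE : IsSquareLabelling E p n)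
    (hp : ∀ {u x y}, E u x → E u y → p u x = p u y → x = y)
    (hn : ∀ {x y v}, E x v → E y v → n x v = n y v → x = y) (u v : α) :
    {l | DWalk E u v l ∧ (wLabels p u l).IsChain (· ≥ ·)}.ncard =
      {l | DWalk E u v l ∧ (wLabels n u l).IsChain (· ≥ ·)}.ncard := by
  have := fun l (hl : DWalk E u v l ∧ (wLabels p u l).IsChain (· ≥ ·)) =>
    hE.exists_nFalling hl.1 hl.2
  choose f hfw hfc hfp hfn using this
  refine Set.ncard_congr f (fun l hl => ⟨hfw l hl, hfc l hl⟩) (fun l₁ l₂ hl₁ hl₂ h => ?_) ?_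
  · refine DWalk.eq_of_wLabels_eq (lab := p) hp hl₁.1 hl₂.1 <|
      (Multiset.coe_eq_coe.1 ?_).eq_of_sortedGE hl₁.2.sortedGE hl₂.2.sortedGE
    rw [← hfp l₁ hl₁, ← hfp l₂ hl₂, h]
  · rintro l ⟨hw, hc⟩
    obtain ⟨l', hw', hc', -, hnl⟩ := hE.exists_pFalling hw hc
    refine ⟨l', ⟨hw', hc'⟩, (List.cons.inj <| DWalk.cons_eq_of_wLabels_eq (lab := n) hn
      (hfw l' _) hw <| (Multiset.coe_eq_coe.1 ?_).eq_of_sortedGE (hfc l' _).sortedGE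
        hc.sortedGE).2⟩
    rw [hfn, hnl]

end IsSquareLabelling

end LabelledWalks

namespace Finset

variable {α : Type*} [DecidableEq α] {s : Finset α} {i j : α}

theorem compl_insert_erase [Fintype α] (hi : i ∈ s) (hj : j ∉ s) :
    (insert j (s.erase i))ᶜ = insert i (sᶜ.erase j) := by
  ext x
  simp only [mem_compl, mem_insert, mem_erase]
  grind

theorem insert_erase_insert_erase (hi : i ∈ s) (hj : j ∉ s) :
    insert i ((insert j (s.erase i)).erase j) = s := by
  ext x
  simp only [mem_insert, mem_erase]
  grind

theorem insert_erase_insert_erase_comm {a b : α} (hab : a ≠ b) (hij : i ≠ j) :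
    insert j ((insert b (s.erase i)).erase a) = insert b ((insert j (s.erase a)).erase i) := by
  ext x
  simp only [mem_insert, mem_erase]
  grind

end Finset

section SubwordReflections

variable {B W : Type*} [Group W] {M : CoxeterMatrix B} (cs : CoxeterSystem M W)
  {m : ℕ} (Q : Fin m → B)

def subword (C : Finset (Fin m)) : List B := (C.sort (· ≤ ·)).map Q

/-- For `C = Iᶜ` this is the root function `r(I, p)` of the paper, with roots replaced by the
corresponding reflections. -/
def subwordRefl (C : Finset (Fin m)) (p : Fin m) : W :=
  cs.wordProd (subword Q (C.filter (· < p))) * cs.simple (Q p) *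
    (cs.wordProd (subword Q (C.filter (· < p))))⁻¹

variable {cs Q}

theorem subword_insert_of_forall_lt {C : Finset (Fin m)} {a : Fin m} (ha : ∀ x ∈ C, a < x) :
    subword Q (insert a C) = Q a :: subword Q C := by
  rw [subword, Finset.sort_insert _ (fun x hx => (ha x hx).le) fun h => (ha a h).false]
  rfl

theorem subwordRefl_congr {C D : Finset (Fin m)} {p : Fin m} (h : ∀ x < p, x ∈ C ↔ x ∈ D) :
    subwordRefl cs Q C p = subwordRefl cs Q D p := by
  have : C.filter (· < p) = D.filter (· < p) := by
    ext x
    simp only [Finset.mem_filter, and_congr_left_iff]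
    exact h x
  rw [subwordRefl, subwordRefl, this]

theorem subwordRefl_of_forall_le {C : Finset (Fin m)} {p : Fin m} (hp : ∀ x ∈ C, p ≤ x) :
    subwordRefl cs Q C p = cs.simple (Q p) := by
  have : C.filter (· < p) = ∅ := Finset.filter_eq_empty_iff.2 fun x hx => not_lt.2 (hp x hx)
  simp [subwordRefl, this, subword]

theorem subwordRefl_insert_of_forall_lt {C : Finset (Fin m)} {a p : Fin m}
    (ha : ∀ x ∈ C, a < x) (hap : a < p) :
    subwordRefl cs Q (insert a C) p =
      cs.simple (Q a) * subwordRefl cs Q C p * (cs.simple (Q a))⁻¹ := by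
  simp only [subwordRefl, Finset.filter_insert, if_pos hap,
    subword_insert_of_forall_lt fun x hx => ha x (Finset.mem_of_mem_filter x hx), cs.wordProd_cons]
  group

theorem subwordRefl_erase_of_le {C : Finset (Fin m)} {j p : Fin m} (h : p ≤ j) :
    subwordRefl cs Q (C.erase j) p = subwordRefl cs Q C p :=
  subwordRefl_congr fun x hx => by simp [(hx.trans_le h).ne]

theorem wordProd_subword_insert {C : Finset (Fin m)} {i : Fin m} (hi : i ∉ C) :
    cs.wordProd (subword Q (insert i C)) = subwordRefl cs Q C i * cs.wordProd (subword Q C) := by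
  induction C using Finset.induction_on_min with
  | empty =>
    rw [subwordRefl_of_forall_le (by simp)]
    simp [subword]
  | insert a C ha ih =>
    rw [Finset.mem_insert, not_or] at hi
    rcases lt_or_gt_of_ne hi.1 with hia | hai
    · rw [subword_insert_of_forall_lt, cs.wordProd_cons, subwordRefl_of_forall_le]
      · simp only [Finset.mem_insert, forall_eq_or_imp]
        exact ⟨hia.le, fun x hx => (hia.trans (ha x hx)).le⟩
      · simp only [Finset.mem_insert, forall_eq_or_imp]
        exact ⟨hia, fun x hx => hia.trans (ha x hx)⟩
    · have ha' : ∀ x ∈ insert i C, a < x := by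
        simp only [Finset.mem_insert, forall_eq_or_imp]
        exact ⟨hai, ha⟩
      rw [Finset.insert_comm, subword_insert_of_forall_lt ha', cs.wordProd_cons, ih hi.2,
        subword_insert_of_forall_lt ha, cs.wordProd_cons, subwordRefl_insert_of_forall_lt ha hai]
      group

theorem subwordRefl_insert {C : Finset (Fin m)} {i : Fin m} (hi : i ∉ C) (p : Fin m) :
    subwordRefl cs Q (insert i C) p =
      if i < p then subwordRefl cs Q C i * subwordRefl cs Q C p * (subwordRefl cs Q C i)⁻¹
      else subwordRefl cs Q C p := by
  split_ifs with hip
  · have hi' : i ∉ C.filter (· < p) := fun h => hi (Finset.mem_of_mem_filter i h)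
    have hr : subwordRefl cs Q (C.filter (· < p)) i = subwordRefl cs Q C i :=
      subwordRefl_congr fun x hx => by simp [hx.trans hip]
    conv_lhs => rw [subwordRefl, Finset.filter_insert, if_pos hip, wordProd_subword_insert hi', hr]
    unfold subwordRefl
    group
  · exact subwordRefl_congr fun x hx => by simp [(hx.trans_le (not_lt.1 hip)).ne]

theorem map_subwordRefl_sort (C : Finset (Fin m)) :
    (C.sort (· ≤ ·)).map (subwordRefl cs Q C) = cs.leftInvSeq (subword Q C) := by
  induction C using Finset.induction_on_min with
  | empty => simp [subword]
  | insert a C ha ih =>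
    have ha' : ∀ x ∈ insert a C, a ≤ x := by
      simp only [Finset.mem_insert, forall_eq_or_imp]
      exact ⟨le_rfl, fun x hx => (ha x hx).le⟩
    rw [Finset.sort_insert _ (fun x hx => (ha x hx).le) fun h => (ha a h).false,
      subword_insert_of_forall_lt ha, CoxeterSystem.leftInvSeq, ← ih, List.map_cons,
      List.map_map, subwordRefl_of_forall_le ha']
    congr 1
    refine List.map_congr_left fun x hx => ?_
    rw [Finset.mem_sort] at hx
    simp [subwordRefl_insert_of_forall_lt ha (ha x hx), CoxeterSystem.inv_simple]

theorem subwordRefl_injOn {C : Finset (Fin m)} (hC : cs.IsReduced (subword Q C)) :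
    Set.InjOn (subwordRefl cs Q C) C := by
  intro x hx y hy hxy
  have hnd := hC.nodup_leftInvSeq
  rw [← map_subwordRefl_sort] at hnd
  exact List.inj_on_of_nodup_map hnd (Finset.mem_sort _ |>.2 hx) (Finset.mem_sort _ |>.2 hy) hxy

theorem wordProd_subword_insert_erase_eq_iff {C : Finset (Fin m)} {a j : Fin m} (hj : j ∈ C)
    (ha : a ∉ C) (haj : a < j) :
    cs.wordProd (subword Q (insert a (C.erase j))) = cs.wordProd (subword Q C) ↔
      subwordRefl cs Q C a = subwordRefl cs Q C j := by
  have hC : cs.wordProd (subword Q C) =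
      subwordRefl cs Q (C.erase j) j * cs.wordProd (subword Q (C.erase j)) := by
    rw [← wordProd_subword_insert (Finset.notMem_erase j C), Finset.insert_erase hj]
  rw [wordProd_subword_insert fun h => ha (Finset.mem_of_mem_erase h), hC, mul_left_inj,
    subwordRefl_erase_of_le haj.le, subwordRefl_erase_of_le le_rfl]

theorem subwordRefl_insert_erase {C : Finset (Fin m)} {a j : Fin m} (hj : j ∈ C) (ha : a ∉ C)
    (haj : a < j) (h : subwordRefl cs Q C a = subwordRefl cs Q C j) (p : Fin m) :
    subwordRefl cs Q (insert a (C.erase j)) p =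
      if a < p ∧ p ≤ j then
        subwordRefl cs Q C a * subwordRefl cs Q C p * (subwordRefl cs Q C a)⁻¹
      else subwordRefl cs Q C p := by
  have hC : subwordRefl cs Q C p = if j < p then
      subwordRefl cs Q C a * subwordRefl cs Q (C.erase j) p * (subwordRefl cs Q C a)⁻¹
      else subwordRefl cs Q (C.erase j) p := by
    conv_lhs => rw [← Finset.insert_erase hj]
    rw [subwordRefl_insert (Finset.notMem_erase j C), subwordRefl_erase_of_le le_rfl, h]
  rw [subwordRefl_insert (fun h => ha (Finset.mem_of_mem_erase h)),
    subwordRefl_erase_of_le haj.le, hC]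
  by_cases hpj : p ≤ j
  · simp [hpj, not_lt.2 hpj, subwordRefl_erase_of_le hpj]
  · simp [hpj, haj.trans (not_le.1 hpj), not_le.1 hpj]

end SubwordReflections

section FlipLabels

variable {m : ℕ} {I : Finset (Fin m)} {i j : Fin m}

theorem pLab_insert_erase (hi : i ∈ I) (hj : j ∉ I) : pLab I (insert j (I.erase i)) = i := by
  have : I \ insert j (I.erase i) = {i} := by
    ext x
    simp only [Finset.mem_sdiff, Finset.mem_insert, Finset.mem_erase, Finset.mem_singleton]
    grind
  simp [pLab, this]

theorem nLab_insert_erase (hj : j ∉ I) : nLab I (insert j (I.erase i)) = j := by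
  have : insert j (I.erase i) \ I = {j} := by
    ext x
    simp only [Finset.mem_sdiff, Finset.mem_insert, Finset.mem_erase, Finset.mem_singleton]
    grind
  simp [nLab, this]

end FlipLabels

section FlipGraph

variable {B W : Type*} [Group W] {M : CoxeterMatrix B} {cs : CoxeterSystem M W}
  {m : ℕ} {Q : Fin m → B} {ρ : W}

theorem IsSCFacet.isReduced {I : Finset (Fin m)} (hI : IsSCFacet cs Q ρ I) :
    cs.IsReduced (subword Q Iᶜ) := by
  rw [CoxeterSystem.IsReduced, subword, hI.1, List.length_map, Finset.length_sort, hI.2]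

theorem flipEdge_insert_erase_iff {I : Finset (Fin m)} (hI : IsSCFacet cs Q ρ I) {i j : Fin m}
    (hi : i ∈ I) (hj : j ∉ I) (hij : i < j) :
    FlipEdge cs Q ρ I (insert j (I.erase i)) ↔ subwordRefl cs Q Iᶜ i = subwordRefl cs Q Iᶜ j := by
  have hprod := wordProd_subword_insert_erase_eq_iff (cs := cs) (Q := Q)
    (Finset.mem_compl.2 hj) (Finset.notMem_compl.2 hi) hij
  rw [← Finset.compl_insert_erase hi hj] at hprod
  constructor
  · rintro ⟨-, hJ, -⟩
    exact hprod.1 (hJ.1.trans hI.1.symm)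
  · intro h
    refine ⟨hI, ⟨(hprod.2 h).trans hI.1, ?_⟩, i, hi, j, Finset.mem_insert_self j _, hij, ?_⟩
    · rw [Finset.compl_insert_erase hi hj, Finset.card_insert_of_notMem (by simp [hi]),
        Finset.card_erase_add_one (Finset.mem_compl.2 hj), hI.2]
    · rw [Finset.erase_insert fun h => hj (Finset.mem_of_mem_erase h)]

theorem flipEdge_iff {I J : Finset (Fin m)} :
    FlipEdge cs Q ρ I J ↔ IsSCFacet cs Q ρ I ∧ ∃ i ∈ I, ∃ j ∉ I, i < j ∧
      subwordRefl cs Q Iᶜ i = subwordRefl cs Q Iᶜ j ∧ J = insert j (I.erase i) := by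
  constructor
  · intro h
    obtain ⟨hI, -, i, hi, j, hjJ, hij, he⟩ := id h
    have hj : j ∉ I := fun hjI => by
      have := Finset.mem_erase.2 ⟨hij.ne', hjI⟩
      simp [he] at this
    have hJ : J = insert j (I.erase i) := by rw [he, Finset.insert_erase hjJ]
    exact ⟨hI, i, hi, j, hj, hij, (flipEdge_insert_erase_iff hI hi hj hij).1 (hJ ▸ h), hJ⟩
  · rintro ⟨hI, i, hi, j, hj, hij, h, rfl⟩
    exact (flipEdge_insert_erase_iff hI hi hj hij).2 h

theorem subwordRefl_compl_insert_erase_eq {I : Finset (Fin m)} {i j : Fin m} (hi : i ∈ I)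
    (hj : j ∉ I) (hij : i < j) (h : subwordRefl cs Q Iᶜ i = subwordRefl cs Q Iᶜ j) :
    subwordRefl cs Q (insert j (I.erase i))ᶜ i = subwordRefl cs Q (insert j (I.erase i))ᶜ j := by
  rw [Finset.compl_insert_erase hi hj, subwordRefl_insert_erase (Finset.mem_compl.2 hj)
      (Finset.notMem_compl.2 hi) hij h, subwordRefl_insert_erase (Finset.mem_compl.2 hj)
      (Finset.notMem_compl.2 hi) hij h]
  simp [hij, h]

theorem FlipEdge.eq_of_pLab_eq {I J₁ J₂ : Finset (Fin m)} (h₁ : FlipEdge cs Q ρ I J₁)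
    (h₂ : FlipEdge cs Q ρ I J₂) (h : pLab I J₁ = pLab I J₂) : J₁ = J₂ := by
  obtain ⟨hI, i₁, hi₁, j₁, hj₁, -, hr₁, rfl⟩ := flipEdge_iff.1 h₁
  obtain ⟨-, i₂, hi₂, j₂, hj₂, -, hr₂, rfl⟩ := flipEdge_iff.1 h₂
  rw [pLab_insert_erase hi₁ hj₁, pLab_insert_erase hi₂ hj₂, Fin.val_inj] at h
  subst h
  rw [subwordRefl_injOn hI.isReduced (Finset.mem_compl.2 hj₁) (Finset.mem_compl.2 hj₂)
    (hr₁.symm.trans hr₂)]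

theorem FlipEdge.eq_of_nLab_eq {I₁ I₂ J : Finset (Fin m)} (h₁ : FlipEdge cs Q ρ I₁ J)
    (h₂ : FlipEdge cs Q ρ I₂ J) (h : nLab I₁ J = nLab I₂ J) : I₁ = I₂ := by
  have hJ : IsSCFacet cs Q ρ J := h₁.2.1
  obtain ⟨-, i₁, hi₁, j₁, hj₁, hij₁, hr₁, hJ₁⟩ := flipEdge_iff.1 h₁
  obtain ⟨-, i₂, hi₂, j₂, hj₂, hij₂, hr₂, hJ₂⟩ := flipEdge_iff.1 h₂
  have hj : j₁ = j₂ := by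
    rw [← Fin.val_inj, ← nLab_insert_erase hj₁, ← nLab_insert_erase hj₂, ← hJ₁, ← hJ₂, h]
  subst hj
  have hi : i₁ = i₂ := by
    refine subwordRefl_injOn hJ.isReduced (by simp [hJ₁, hij₁.ne]) (by simp [hJ₂, hij₂.ne]) ?_
    rw [hJ₁, subwordRefl_compl_insert_erase_eq hi₁ hj₁ hij₁ hr₁, ← hJ₁, hJ₂,
      subwordRefl_compl_insert_erase_eq hi₂ hj₂ hij₂ hr₂]
  subst hi
  rw [← Finset.insert_erase_insert_erase hi₁ hj₁, ← Finset.insert_erase_insert_erase hi₂ hj₂,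
    ← hJ₁, ← hJ₂]

theorem FlipEdge.pLab_ne {I X Y : Finset (Fin m)} (h₁ : FlipEdge cs Q ρ I X)
    (h₂ : FlipEdge cs Q ρ X Y) : pLab I X ≠ pLab X Y := by
  obtain ⟨-, i, hi, j, hj, hij, -, rfl⟩ := flipEdge_iff.1 h₁
  obtain ⟨-, a, ha, b, hb, -, -, rfl⟩ := flipEdge_iff.1 h₂
  rw [pLab_insert_erase hi hj, pLab_insert_erase ha hb, Ne, Fin.val_inj]
  rintro rfl
  simp [hij.ne] at ha

theorem FlipEdge.nLab_ne {I X Y : Finset (Fin m)} (h₁ : FlipEdge cs Q ρ I X)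
    (h₂ : FlipEdge cs Q ρ X Y) : nLab I X ≠ nLab X Y := by
  obtain ⟨-, i, hi, j, hj, -, -, rfl⟩ := flipEdge_iff.1 h₁
  obtain ⟨-, a, ha, b, hb, -, -, rfl⟩ := flipEdge_iff.1 h₂
  rw [nLab_insert_erase hj, nLab_insert_erase hb, Ne, Fin.val_inj]
  rintro rfl
  simp at hb

/-- Both sides say `r(i) = r(b)` and `r(a) = r(j)`: the flip `i ↦ b` conjugates both `r(a)` and
`r(j)`, while the flip `a ↦ j` changes neither `r(i)` nor `r(b)`. -/
theorem flipEdge_square {I : Finset (Fin m)} (hI : IsSCFacet cs Q ρ I) {i a j b : Fin m}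
    (hi : i ∈ I) (ha : a ∈ I) (hj : j ∉ I) (hb : b ∉ I)
    (hia : i < a) (haj : a < j) (hjb : j < b) :
    (FlipEdge cs Q ρ I (insert b (I.erase i)) ∧
      FlipEdge cs Q ρ (insert b (I.erase i)) (insert j ((insert b (I.erase i)).erase a))) ↔
    (FlipEdge cs Q ρ I (insert j (I.erase a)) ∧
      FlipEdge cs Q ρ (insert j (I.erase a)) (insert b ((insert j (I.erase a)).erase i))) := by
  have hib := hia.trans (haj.trans hjb)
  have hjC : j ∈ Iᶜ := Finset.mem_compl.2 hj
  have hbC : b ∈ Iᶜ := Finset.mem_compl.2 hb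
  have hiC : i ∉ Iᶜ := Finset.notMem_compl.2 hi
  have haC : a ∉ Iᶜ := Finset.notMem_compl.2 ha
  trans subwordRefl cs Q Iᶜ i = subwordRefl cs Q Iᶜ b ∧
    subwordRefl cs Q Iᶜ a = subwordRefl cs Q Iᶜ j
  · rw [flipEdge_insert_erase_iff hI hi hb hib]
    refine and_congr_right fun h => ?_
    have hX := ((flipEdge_insert_erase_iff hI hi hb hib).2 h).2.1
    rw [flipEdge_insert_erase_iff hX (by simp [ha, hia.ne', (haj.trans hjb).ne])
      (by simp [hj, hjb.ne]) haj, Finset.compl_insert_erase hi hb,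
      subwordRefl_insert_erase hbC hiC hib h, subwordRefl_insert_erase hbC hiC hib h]
    simp [hia, haj.le.trans hjb.le, hia.trans haj, hjb.le]
  · rw [and_comm, flipEdge_insert_erase_iff hI ha hj haj]
    refine and_congr_right fun h => ?_
    have hY := ((flipEdge_insert_erase_iff hI ha hj haj).2 h).2.1
    rw [flipEdge_insert_erase_iff hY (by simp [hi, hia.ne, (hia.trans haj).ne])
      (by simp [hb, hjb.ne']) hib, Finset.compl_insert_erase ha hj,
      subwordRefl_insert_erase hjC haC haj h, subwordRefl_insert_erase hjC haC haj h]
    rw [if_neg fun h => hia.not_gt h.1, if_neg fun h => hjb.not_ge h.2]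

variable (cs Q ρ)

theorem isSquareLabelling_flipEdge : IsSquareLabelling (FlipEdge cs Q ρ) pLab nLab where
  p_ne := FlipEdge.pLab_ne
  n_ne := FlipEdge.nLab_ne
  swap_of_gt_of_lt {I _ _} h₁ h₂ hp hn := by
    obtain ⟨hI, a, ha, j, hj, haj, -, rfl⟩ := flipEdge_iff.1 h₁
    obtain ⟨-, i, hi, b, hb, -, -, rfl⟩ := flipEdge_iff.1 h₂
    rw [pLab_insert_erase ha hj, pLab_insert_erase hi hb, Fin.val_fin_lt] at hp
    rw [nLab_insert_erase hj, nLab_insert_erase hb, Fin.val_fin_lt] at hn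
    have hiI : i ∈ I := by
      simp only [Finset.mem_insert, Finset.mem_erase] at hi
      grind
    have hbI : b ∉ I := by
      simp only [Finset.mem_insert, Finset.mem_erase, not_or, not_and] at hb
      grind
    obtain ⟨h₁', h₂'⟩ := (flipEdge_square hI hiI ha hj hbI hp haj hn).2 ⟨h₁, h₂⟩
    rw [pLab_insert_erase hi hb, nLab_insert_erase hb, pLab_insert_erase ha hj,
      nLab_insert_erase hj,
      ← Finset.insert_erase_insert_erase_comm (haj.trans hn).ne (hp.trans haj).ne]
    refine ⟨_, h₁', h₂', ?_⟩
    rw [pLab_insert_erase hiI hbI, nLab_insert_erase hbI,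
      pLab_insert_erase (by simp [ha, hp.ne', (haj.trans hn).ne])
        (by simp [hj, hn.ne, (hp.trans haj).ne']),
      nLab_insert_erase (by simp [hj, hn.ne, (hp.trans haj).ne'])]
    exact ⟨rfl, rfl, rfl, rfl⟩
  swap_of_lt_of_gt {I _ _} h₁ h₂ hp hn := by
    obtain ⟨hI, i, hi, b, hb, -, -, rfl⟩ := flipEdge_iff.1 h₁
    obtain ⟨-, a, ha, j, hj, haj, -, rfl⟩ := flipEdge_iff.1 h₂
    rw [pLab_insert_erase hi hb, pLab_insert_erase ha hj, Fin.val_fin_lt] at hp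
    rw [nLab_insert_erase hb, nLab_insert_erase hj, Fin.val_fin_lt] at hn
    have haI : a ∈ I := by
      simp only [Finset.mem_insert, Finset.mem_erase] at ha
      grind
    have hjI : j ∉ I := by
      simp only [Finset.mem_insert, Finset.mem_erase, not_or, not_and] at hj
      grind
    obtain ⟨h₁', h₂'⟩ := (flipEdge_square hI hi haI hjI hb hp haj hn).1 ⟨h₁, h₂⟩
    rw [pLab_insert_erase hi hb, nLab_insert_erase hb, pLab_insert_erase ha hj,
      nLab_insert_erase hj,
      Finset.insert_erase_insert_erase_comm (haj.trans hn).ne (hp.trans haj).ne]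
    refine ⟨_, h₁', h₂', ?_⟩
    rw [pLab_insert_erase haI hjI, nLab_insert_erase hjI,
      pLab_insert_erase (by simp [hi, hp.ne, (hp.trans haj).ne]) (by simp [hb, hn.ne']),
      nLab_insert_erase (by simp [hb, hn.ne'])]
    exact ⟨rfl, rfl, rfl, rfl⟩

end FlipGraph

theorem falling_paths_bijection_general {B W : Type*} [Group W]
    {M : CoxeterMatrix B} (cs : CoxeterSystem M W)
    {m : ℕ} (Q : Fin m → B) (ρ : W) (I J : Finset (Fin m)) :
    (∀ A B' : Multiset ℕ,
      (∃ l : List (Finset (Fin m)), DWalk (FlipEdge cs Q ρ) I J l ∧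
        List.Chain' (· ≥ ·) (wLabels pLab I l) ∧
        (wLabels pLab I l : Multiset ℕ) = A ∧ (wLabels nLab I l : Multiset ℕ) = B') ↔
      (∃ l : List (Finset (Fin m)), DWalk (FlipEdge cs Q ρ) I J l ∧
        List.Chain' (· ≥ ·) (wLabels nLab I l) ∧
        (wLabels pLab I l : Multiset ℕ) = A ∧ (wLabels nLab I l : Multiset ℕ) = B')) ∧
    {l : List (Finset (Fin m)) | DWalk (FlipEdge cs Q ρ) I J l ∧
        List.Chain' (· ≥ ·) (wLabels pLab I l)}.ncard =
      {l : List (Finset (Fin m)) | DWalk (FlipEdge cs Q ρ) I J l ∧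
        List.Chain' (· ≥ ·) (wLabels nLab I l)}.ncard :=
  have hE := isSquareLabelling_flipEdge cs Q ρ
  ⟨hE.exists_pFalling_iff_exists_nFalling I J,
    hE.ncard_pFalling_eq_ncard_nFalling FlipEdge.eq_of_pLab_eq FlipEdge.eq_of_nLab_eq I J⟩

/-- For any two facets `I`, `J` and multisets `A`, `B` of positions: there is a
positive-falling path from `I` to `J` flipping out `A` and flipping in `B` if and only if
there is a negative-falling path with the same property.  In particular positive-falling
and negative-falling paths from `I` to `J` are equinumerous. -/
theorem falling_paths_bijection {B W : Type*} [Group W] [Finite W]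
    {M : CoxeterMatrix B} (cs : CoxeterSystem M W)
    {m : ℕ} (Q : Fin m → B) (ρ : W) (I J : Finset (Fin m))
    (hI : IsSCFacet cs Q ρ I) (hJ : IsSCFacet cs Q ρ J) :
    (∀ A B' : Multiset ℕ,
      (∃ l : List (Finset (Fin m)), DWalk (FlipEdge cs Q ρ) I J l ∧
        List.Chain' (· ≥ ·) (wLabels pLab I l) ∧
        (wLabels pLab I l : Multiset ℕ) = A ∧ (wLabels nLab I l : Multiset ℕ) = B') ↔
      (∃ l : List (Finset (Fin m)), DWalk (FlipEdge cs Q ρ) I J l ∧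
        List.Chain' (· ≥ ·) (wLabels nLab I l) ∧
        (wLabels pLab I l : Multiset ℕ) = A ∧ (wLabels nLab I l : Multiset ℕ) = B')) ∧
    {l : List (Finset (Fin m)) | DWalk (FlipEdge cs Q ρ) I J l ∧
        List.Chain' (· ≥ ·) (wLabels pLab I l)}.ncard =
      {l : List (Finset (Fin m)) | DWalk (FlipEdge cs Q ρ) I J l ∧
        List.Chain' (· ≥ ·) (wLabels nLab I l)}.ncard :=
  falling_paths_bijection_general cs Q ρ I J
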